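/- Let F:[0,1]²→[0,1] be a continuous operation that is nondecreasing in each variable, and let f be a convex fuzzy truth value. Then for all fuzzy truth values g and h, f ⊙_F (g ⊔ h) = (f ⊙_F g) ⊔ (f ⊙_F h). -/

import Mathlib

/-!
For `≤`, monotonicity of `F` in its second argument gives `F x (max u v) = max (F x u) (F x v)`,
so every term of the left-hand supremum is dominated by a term of the right-hand one.

For `≥`, take `F x u = a`, `F x' v = b` with `max a b = z`, say `v ≤ u`. Then `z` lies between
`F x u` and `F x' u`, so by the intermediate value theorem `z = F X u` for some `X` between `x`
and `x'`, and convexity gives `f X ≥ min (f x) (f x')`. The pair `(X, max u v)` then realises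
the right-hand term on the left.
-/

open Set

/-- The extension of a binary operation `G` on `[0,1]` to fuzzy truth values:
`(f ⊙_G g)(z) = sup { min (f x) (g y) | x, y ∈ [0,1], G x y = z }` (with `sSup ∅ = 0` in `ℝ`). -/
noncomputable def extOp (G : ℝ → ℝ → ℝ) (f g : ℝ → ℝ) : ℝ → ℝ := fun z =>
  sSup {r : ℝ | ∃ x ∈ Icc (0:ℝ) 1, ∃ y ∈ Icc (0:ℝ) 1, G x y = z ∧ r = min (f x) (g y)}

/-- A fuzzy truth value: a map of `[0,1]` into itself. -/
def IsFTV (f : ℝ → ℝ) : Prop := ∀ x ∈ Icc (0:ℝ) 1, f x ∈ Icc (0:ℝ) 1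

/-- Convexity of a fuzzy truth value. -/
def ConvexFTV (f : ℝ → ℝ) : Prop :=
  ∀ x y z : ℝ, 0 ≤ x → x ≤ y → y ≤ z → z ≤ 1 → min (f x) (f z) ≤ f y

/-- `F` maps `[0,1]²` into `[0,1]`. -/
def MapsI (F : ℝ → ℝ → ℝ) : Prop :=
  ∀ x ∈ Icc (0:ℝ) 1, ∀ y ∈ Icc (0:ℝ) 1, F x y ∈ Icc (0:ℝ) 1

/-- `F` is nondecreasing in each variable on `[0,1]²`. -/
def MonoI (F : ℝ → ℝ → ℝ) : Prop :=
  ∀ x₁ x₂ y₁ y₂ : ℝ, x₁ ∈ Icc (0:ℝ) 1 → x₂ ∈ Icc (0:ℝ) 1 → y₁ ∈ Icc (0:ℝ) 1 →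
    y₂ ∈ Icc (0:ℝ) 1 → x₁ ≤ x₂ → y₁ ≤ y₂ → F x₁ y₁ ≤ F x₂ y₂

/-- `F` is continuous on `[0,1]²`. -/
def ContI (F : ℝ → ℝ → ℝ) : Prop :=
  ContinuousOn (fun p : ℝ × ℝ => F p.1 p.2) (Icc (0:ℝ) 1 ×ˢ Icc (0:ℝ) 1)

/-- `F` is commutative on `[0,1]²`. -/
def CommI (F : ℝ → ℝ → ℝ) : Prop := ∀ x ∈ Icc (0:ℝ) 1, ∀ y ∈ Icc (0:ℝ) 1, F x y = F y x

/-- `F` is associative on `[0,1]`. -/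
def AssocI (F : ℝ → ℝ → ℝ) : Prop :=
  ∀ x ∈ Icc (0:ℝ) 1, ∀ y ∈ Icc (0:ℝ) 1, ∀ z ∈ Icc (0:ℝ) 1, F (F x y) z = F x (F y z)

lemma min_sSup_le_of_forall {B : Set ℝ} {p c : ℝ} (hc : 0 ≤ c)
    (H : ∀ q ∈ B, min p q ≤ c) : min p (sSup B) ≤ c := by
  rcases B.eq_empty_or_nonempty with rfl | hB
  · rw [Real.sSup_empty]
    exact (min_le_right _ _).trans hc
  · by_contra! hlt
    obtain ⟨q, hq, hcq⟩ := exists_lt_of_lt_csSup hB (hlt.trans_le (min_le_right _ _))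
    exact (H q hq).not_gt (lt_min (hlt.trans_le (min_le_left _ _)) hcq)

section extOp

variable {G : ℝ → ℝ → ℝ} {f g : ℝ → ℝ}

lemma le_extOp (hf : IsFTV f) {x y : ℝ} (hx : x ∈ Icc (0:ℝ) 1) (hy : y ∈ Icc (0:ℝ) 1) :
    min (f x) (g y) ≤ extOp G f g (G x y) := by
  refine le_csSup ⟨1, ?_⟩ ⟨x, hx, y, hy, rfl, rfl⟩
  rintro _ ⟨x', hx', -, -, -, rfl⟩
  exact (min_le_left _ _).trans (hf x' hx').2

lemma extOp_le {z c : ℝ} (hc : 0 ≤ c)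
    (H : ∀ x ∈ Icc (0:ℝ) 1, ∀ y ∈ Icc (0:ℝ) 1, G x y = z → min (f x) (g y) ≤ c) :
    extOp G f g z ≤ c := by
  refine Real.sSup_le ?_ hc
  rintro _ ⟨x, hx, y, hy, hxy, rfl⟩
  exact H x hx y hy hxy

lemma min_extOp_le {z p c : ℝ} (hc : 0 ≤ c)
    (H : ∀ x ∈ Icc (0:ℝ) 1, ∀ y ∈ Icc (0:ℝ) 1, G x y = z → min p (min (f x) (g y)) ≤ c) :
    min p (extOp G f g z) ≤ c := by
  refine min_sSup_le_of_forall hc ?_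
  rintro _ ⟨x, hx, y, hy, hxy, rfl⟩
  exact H x hx y hy hxy

lemma extOp_min_le {z p c : ℝ} (hc : 0 ≤ c)
    (H : ∀ x ∈ Icc (0:ℝ) 1, ∀ y ∈ Icc (0:ℝ) 1, G x y = z → min (min (f x) (g y)) p ≤ c) :
    min (extOp G f g z) p ≤ c := by
  rw [min_comm]
  exact min_extOp_le hc fun x hx y hy hxy => min_comm p _ ▸ H x hx y hy hxy

lemma extOp_nonneg (hf : IsFTV f) (hg : IsFTV g) (z : ℝ) : 0 ≤ extOp G f g z := by
  refine Real.sSup_nonneg ?_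
  rintro _ ⟨x, hx, y, hy, -, rfl⟩
  exact le_min (hf x hx).1 (hg y hy).1

lemma IsFTV.extOp (hf : IsFTV f) (hg : IsFTV g) : IsFTV (extOp G f g) :=
  fun z _ => ⟨extOp_nonneg hf hg z,
    extOp_le zero_le_one fun x hx _ _ _ => (min_le_left _ _).trans (hf x hx).2⟩

end extOp

lemma ConvexFTV.min_le_of_mem_uIcc {f : ℝ → ℝ} (hf : ConvexFTV f) {x x' X : ℝ}
    (hx : x ∈ Icc (0:ℝ) 1) (hx' : x' ∈ Icc (0:ℝ) 1) (hX : X ∈ uIcc x x') :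
    min (f x) (f x') ≤ f X := by
  rcases mem_uIcc.mp hX with ⟨h₁, h₂⟩ | ⟨h₁, h₂⟩
  · exact hf x X x' hx.1 h₁ h₂ hx'.2
  · rw [min_comm]
    exact hf x' X x hx'.1 h₁ h₂ hx.2

lemma ContI.continuousOn_left {F : ℝ → ℝ → ℝ} (hF : ContI F) {c : ℝ} (hc : c ∈ Icc (0:ℝ) 1) :
    ContinuousOn (fun t => F t c) (Icc (0:ℝ) 1) :=
  hF.comp (continuous_id.prodMk continuous_const).continuousOn fun _ ht => mk_mem_prod ht hc

lemma MonoI.apply_max {F : ℝ → ℝ → ℝ} (hF : MonoI F) {x u v : ℝ} (hx : x ∈ Icc (0:ℝ) 1)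
    (hu : u ∈ Icc (0:ℝ) 1) (hv : v ∈ Icc (0:ℝ) 1) : F x (max u v) = max (F x u) (F x v) := by
  rcases le_total u v with huv | hvu
  · rw [max_eq_right huv, max_eq_right (hF x x u v hx hx hu hv le_rfl huv)]
  · rw [max_eq_left hvu, max_eq_left (hF x x v u hx hx hv hu le_rfl hvu)]

section convex

variable {F : ℝ → ℝ → ℝ} {f : ℝ → ℝ} {x x' u v : ℝ}

lemma exists_apply_eq_max_of_le (hFcont : ContI F) (hFmono : MonoI F) (hf : ConvexFTV f)
    (hx : x ∈ Icc (0:ℝ) 1) (hx' : x' ∈ Icc (0:ℝ) 1) (hu : u ∈ Icc (0:ℝ) 1)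
    (hv : v ∈ Icc (0:ℝ) 1) (hvu : v ≤ u) :
    ∃ X ∈ Icc (0:ℝ) 1, F X u = max (F x u) (F x' v) ∧ min (f x) (f x') ≤ f X := by
  have hsub : uIcc x x' ⊆ Icc (0:ℝ) 1 := uIcc_subset_Icc hx hx'
  have hbetween : max (F x u) (F x' v) ∈ uIcc (F x u) (F x' u) :=
    ⟨(min_le_left _ _).trans (le_max_left _ _),
      max_le_max le_rfl (hFmono x' x' v u hx' hx' hv hu le_rfl hvu)⟩
  obtain ⟨X, hX, hFX⟩ :=
    intermediate_value_uIcc ((hFcont.continuousOn_left hu).mono hsub) hbetween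
  exact ⟨X, hsub hX, hFX, hf.min_le_of_mem_uIcc hx hx' hX⟩

lemma exists_apply_max_eq_max (hFcont : ContI F) (hFmono : MonoI F) (hf : ConvexFTV f)
    (hx : x ∈ Icc (0:ℝ) 1) (hx' : x' ∈ Icc (0:ℝ) 1) (hu : u ∈ Icc (0:ℝ) 1)
    (hv : v ∈ Icc (0:ℝ) 1) :
    ∃ X ∈ Icc (0:ℝ) 1, F X (max u v) = max (F x u) (F x' v) ∧ min (f x) (f x') ≤ f X := by
  rcases le_total v u with hvu | huv
  · rw [max_eq_left hvu]
    exact exists_apply_eq_max_of_le hFcont hFmono hf hx hx' hu hv hvu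
  · obtain ⟨X, hX, hFX, hfX⟩ := exists_apply_eq_max_of_le hFcont hFmono hf hx' hx hv hu huv
    exact ⟨X, hX, by rw [max_eq_right huv, hFX, max_comm], by rwa [min_comm]⟩

end convex

section distrib

variable {F : ℝ → ℝ → ℝ} {f g h : ℝ → ℝ}

lemma extOp_extOp_max_le (hFmap : MapsI F) (hFmono : MonoI F)
    (hf : IsFTV f) (hg : IsFTV g) (hh : IsFTV h) (z : ℝ) :
    extOp F f (extOp max g h) z ≤ extOp max (extOp F f g) (extOp F f h) z := by
  have hnonneg : 0 ≤ extOp max (extOp F f g) (extOp F f h) z :=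
    extOp_nonneg (hf.extOp hg) (hf.extOp hh) z
  refine extOp_le hnonneg fun x hx y _ hxy => ?_
  refine min_extOp_le hnonneg fun u hu v hv huv => ?_
  calc min (f x) (min (g u) (h v))
      ≤ min (min (f x) (g u)) (min (f x) (h v)) :=
        le_min (min_le_min_left _ (min_le_left _ _)) (min_le_min_left _ (min_le_right _ _))
    _ ≤ min (extOp F f g (F x u)) (extOp F f h (F x v)) :=
        min_le_min (le_extOp hf hx hu) (le_extOp hf hx hv)
    _ ≤ extOp max (extOp F f g) (extOp F f h) (max (F x u) (F x v)) :=
        le_extOp (hf.extOp hg) (hFmap x hx u hu) (hFmap x hx v hv)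
    _ = extOp max (extOp F f g) (extOp F f h) z := by
        rw [← hFmono.apply_max hx hu hv, huv, hxy]

lemma extOp_max_extOp_le (hFcont : ContI F) (hFmono : MonoI F)
    (hf : IsFTV f) (hfconvex : ConvexFTV f) (hg : IsFTV g) (hh : IsFTV h) (z : ℝ) :
    extOp max (extOp F f g) (extOp F f h) z ≤ extOp F f (extOp max g h) z := by
  have hnonneg : 0 ≤ extOp F f (extOp max g h) z := extOp_nonneg hf (hg.extOp hh) z
  refine extOp_le hnonneg fun a _ b _ hab => ?_
  refine extOp_min_le hnonneg fun x hx u hu hxu => ?_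
  refine min_extOp_le hnonneg fun x' hx' v hv hx'v => ?_
  obtain ⟨X, hX, hFX, hfX⟩ := exists_apply_max_eq_max hFcont hFmono hfconvex hx hx' hu hv
  calc min (min (f x) (g u)) (min (f x') (h v))
      = min (min (f x) (f x')) (min (g u) (h v)) := min_min_min_comm _ _ _ _
    _ ≤ min (f X) (extOp max g h (max u v)) := min_le_min hfX (le_extOp hg hu hv)
    _ ≤ extOp F f (extOp max g h) (F X (max u v)) :=
        le_extOp hf hX ⟨hu.1.trans (le_max_left _ _), max_le hu.2 hv.2⟩
    _ = extOp F f (extOp max g h) z := by rw [hFX, hxu, hx'v, hab]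

end distrib

/-- Distributivity of an extended continuous nondecreasing operation over the
extended maximum `⊔`, for a convex first argument. -/
theorem extOp_distrib_sup (F : ℝ → ℝ → ℝ)
    (hFmap : MapsI F) (hFcont : ContI F) (hFmono : MonoI F)
    (f : ℝ → ℝ) (hf : IsFTV f) (hfconvex : ConvexFTV f)
    (g h : ℝ → ℝ) (hg : IsFTV g) (hh : IsFTV h) :
    ∀ z ∈ Icc (0:ℝ) 1,
      extOp F f (extOp max g h) z = extOp max (extOp F f g) (extOp F f h) z := fun z _ =>
  le_antisymm (extOp_extOp_max_le hFmap hFmono hf hg hh z)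
    (extOp_max_extOp_le hFcont hFmono hf hfconvex hg hh z)
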